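/- (Theorem 3, deterministic guarantee of the doubly robust program.) Let h(y) = max_{1 ≤ j ≤ J}(a_j · y + b_j) and g(y) = max_{1 ≤ l ≤ L}(c_l · y + d_l) with a_j, c_l ∈ ℝ^d and b_j, d_l ∈ ℝ; set λ = max_j ‖a_j‖_∞ and θ = max_l ‖c_l‖_∞. Fix β ∈ (0, 1], points ŷ^1, …, ŷ^N ∈ ℝ^d, a radius ε ≥ 0, and reals s_1, …, s_N, q_1, …, q_N, t satisfying: (i) a_j · ŷ^i + b_j ≤ s_i for all i, j; (ii) θ ε + (1/N)Σ_{i=1}^N q_i ≤ t β; (iii) (c_l · ŷ^i + d_l + t)_+ ≤ q_i for all i, l. Then for every probability measure ℙ on ℝ^d with finite first moment satisfying d_W(ℙ, P̄) ≤ ε, where P̄ = (1/N)Σ_i δ_{ŷ^i}, it holds that (a) ∫ h dℙ ≤ λ ε + (1/N)Σ_{i=1}^N s_i, and (b) CVaR_{1−β}^{ℙ}(g) ≤ 0. -/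

import Mathlib

open MeasureTheory Matrix
open scoped ENNReal

/-- The ℓ¹-norm of a vector. -/
noncomputable def l1norm {ι : Type*} [Fintype ι] (v : ι → ℝ) : ℝ := ∑ i, |v i|

/-- The induced ℓ¹-norm of a matrix (maximum absolute column sum). -/
noncomputable def matL1 {ι κ : Type*} [Fintype ι] [Fintype κ] (M : Matrix ι κ ℝ) : ℝ :=
  ⨆ j, ∑ i, |M i j|

/-- The Wasserstein-1 distance (w.r.t. the ℓ¹-norm): infimum over couplings of the expected
ℓ¹-distance. -/
noncomputable def wass {ι : Type*} [Fintype ι] (P Q : Measure (ι → ℝ)) : ℝ :=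
  sInf { r | ∃ π : Measure ((ι → ℝ) × (ι → ℝ)),
    IsProbabilityMeasure π ∧ π.map Prod.fst = P ∧ π.map Prod.snd = Q ∧
    r = ∫ p, l1norm (p.1 - p.2) ∂π }

/-- The uniform empirical measure `(1/N) ∑ᵢ δ_{a i}`. -/
noncomputable def emp {ι : Type*} [Fintype ι] {N : ℕ} (a : Fin N → (ι → ℝ)) :
    Measure (ι → ℝ) :=
  (N : ℝ≥0∞)⁻¹ • ∑ i, Measure.dirac (a i)

/-- The block-downshift matrix `Z`, with `n × n` identity blocks on the first block
subdiagonal and zero blocks elsewhere. -/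
noncomputable def dshift (T n : ℕ) : Matrix (Fin (T+1) × Fin n) (Fin (T+1) × Fin n) ℝ :=
  fun p q => if (p.1 : ℕ) = (q.1 : ℕ) + 1 ∧ p.2 = q.2 then 1 else 0

/-- `blkdiag T M`: block-diagonal matrix with `T+1` copies of `M` on the diagonal. -/
noncomputable def blkdiag (T : ℕ) {n m : ℕ} (M : Matrix (Fin n) (Fin m) ℝ) :
    Matrix (Fin (T+1) × Fin n) (Fin (T+1) × Fin m) ℝ :=
  fun p q => if p.1 = q.1 then M p.2 q.2 else 0

/-- A block-partitioned matrix is block lower triangular: all blocks strictly above the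
block diagonal are zero. -/
def BlockLT {T n m : ℕ} (M : Matrix (Fin (T+1) × Fin m) (Fin (T+1) × Fin n) ℝ) : Prop :=
  ∀ p q, p.1 < q.1 → M p q = 0

/-!
Both `h` and `ψₜ := (g + t)₊` are Lipschitz for the ℓ¹-norm, with constants `λ` and `θ`. For a
function `f` that is `M`-Lipschitz in this sense and any coupling `π` of `ℙ` and `P̄`,
`∫ f dℙ = ∫ f(x₁) dπ ≤ ∫ f(x₂) dπ + M ∫ ‖x₁ - x₂‖ dπ = ∫ f dP̄ + M ∫ ‖x₁ - x₂‖ dπ`, and taking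
the infimum over couplings gives `∫ f dℙ ≤ ∫ f dP̄ + M ε`. Part (a) follows from (i), and part (b)
by evaluating the CVaR objective at `t' = t` and using (ii) and (iii).
-/

section L1Norm

variable {ι : Type*} [Fintype ι]

lemma l1norm_nonneg (v : ι → ℝ) : 0 ≤ l1norm v :=
  Finset.sum_nonneg fun _ _ => abs_nonneg _

lemma l1norm_neg (v : ι → ℝ) : l1norm (-v) = l1norm v := by
  simp [l1norm]

lemma l1norm_sub_le (x y : ι → ℝ) : l1norm (x - y) ≤ l1norm x + l1norm y := by
  rw [l1norm, l1norm, l1norm, ← Finset.sum_add_distrib]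
  exact Finset.sum_le_sum fun k _ => abs_sub _ _

lemma l1norm_le_card_mul_norm (v : ι → ℝ) : l1norm v ≤ Fintype.card ι * ‖v‖ :=
  calc l1norm v ≤ ∑ _k : ι, ‖v‖ := Finset.sum_le_sum fun k _ => norm_le_pi_norm v k
    _ = Fintype.card ι * ‖v‖ := by simp

/-- Equivalent, by swapping `x` and `y`, to `M`-Lipschitz continuity for the ℓ¹-norm. -/
def L1Lipschitz (M : ℝ) (f : (ι → ℝ) → ℝ) : Prop :=
  ∀ x y, f x ≤ f y + M * l1norm (x - y)

lemma l1Lipschitz_l1norm : L1Lipschitz 1 (l1norm : (ι → ℝ) → ℝ) := fun x y => by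
  have := l1norm_sub_le (x - y) (-y)
  rw [sub_neg_eq_add, sub_add_cancel, l1norm_neg] at this
  linarith

lemma l1Lipschitz_affine {M : ℝ} (c : ι → ℝ) (e : ℝ) (hc : ∀ k, |c k| ≤ M) :
    L1Lipschitz M (fun y => ∑ k, c k * y k + e) := fun x y => by
  have : ∑ k, c k * x k - ∑ k, c k * y k ≤ M * l1norm (x - y) :=
    calc ∑ k, c k * x k - ∑ k, c k * y k = ∑ k, c k * (x - y) k := by
          rw [← Finset.sum_sub_distrib]; simp only [Pi.sub_apply, mul_sub]
      _ ≤ ∑ k, M * |(x - y) k| := Finset.sum_le_sum fun k _ =>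
          (le_abs_self _).trans <| by rw [abs_mul]; gcongr; exact hc k
      _ = M * l1norm (x - y) := by rw [l1norm, Finset.mul_sum]
  linarith

namespace L1Lipschitz

variable {M : ℝ} {f : (ι → ℝ) → ℝ}

lemma iSup {κ : Type*} [Finite κ] [Nonempty κ] {f : κ → (ι → ℝ) → ℝ}
    (hf : ∀ l, L1Lipschitz M (f l)) : L1Lipschitz M (fun y => ⨆ l, f l y) := fun x y =>
  ciSup_le fun l => (hf l x y).trans <| by
    gcongr; exact le_ciSup (f := fun l => f l y) (Set.finite_range _).bddAbove l

lemma max_add_const_zero (hM : 0 ≤ M) (hf : L1Lipschitz M f) (t : ℝ) :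
    L1Lipschitz M (fun y => max (f y + t) 0) := fun x y =>
  max_le (by linarith [hf x y, le_max_left (f y + t) 0])
    (add_nonneg (le_max_right _ _) (mul_nonneg hM (l1norm_nonneg _)))

lemma lipschitzWith (hM : 0 ≤ M) (hf : L1Lipschitz M f) :
    LipschitzWith (M * Fintype.card ι).toNNReal f :=
  LipschitzWith.of_le_add_mul' _ fun x y => (hf x y).trans <| by
    rw [dist_eq_norm, mul_assoc]; gcongr; exact l1norm_le_card_mul_norm _

lemma continuous (hM : 0 ≤ M) (hf : L1Lipschitz M f) : Continuous f :=
  (hf.lipschitzWith hM).continuous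

lemma abs_le (hf : L1Lipschitz M f) (y : ι → ℝ) : |f y| ≤ |f 0| + M * l1norm y := by
  have h₁ := hf y 0
  have h₂ := hf 0 y
  rw [sub_zero] at h₁
  rw [zero_sub, l1norm_neg] at h₂
  rw [_root_.abs_le]
  constructor <;> linarith [neg_abs_le (f 0), le_abs_self (f 0)]

lemma integrable (hM : 0 ≤ M) (hf : L1Lipschitz M f) {P : Measure (ι → ℝ)} [IsFiniteMeasure P]
    (hP : Integrable l1norm P) : Integrable f P :=
  ((integrable_const |f 0|).add (hP.const_mul M)).mono' (hf.continuous hM).aestronglyMeasurable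
    (ae_of_all _ hf.abs_le)

lemma integral_le_of_coupling (hM : 0 ≤ M) (hf : L1Lipschitz M f)
    {π : Measure ((ι → ℝ) × (ι → ℝ))} [IsProbabilityMeasure π]
    (hP : Integrable l1norm (π.map Prod.fst)) (hQ : Integrable l1norm (π.map Prod.snd)) :
    ∫ y, f y ∂(π.map Prod.fst)
      ≤ ∫ y, f y ∂(π.map Prod.snd) + M * ∫ p, l1norm (p.1 - p.2) ∂π := by
  have hfc := hf.continuous hM
  have hl1c := l1Lipschitz_l1norm.continuous (ι := ι) zero_le_one
  have pullback {φ : (ι → ℝ) × (ι → ℝ) → ι → ℝ} (hφ : Measurable φ) {u : (ι → ℝ) → ℝ}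
      (hu : Continuous u) (h : Integrable u (π.map φ)) : Integrable (fun p => u (φ p)) π :=
    (integrable_map_measure hu.aestronglyMeasurable hφ.aemeasurable).mp h
  have hf₁ := pullback measurable_fst hfc (hf.integrable hM hP)
  have hf₂ := pullback measurable_snd hfc (hf.integrable hM hQ)
  have hcost : Integrable (fun p : (ι → ℝ) × (ι → ℝ) => l1norm (p.1 - p.2)) π :=
    ((pullback measurable_fst hl1c hP).add (pullback measurable_snd hl1c hQ)).mono'
      (hl1c.comp (continuous_fst.sub continuous_snd)).aestronglyMeasurable
      (ae_of_all _ fun p => by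
        rw [Real.norm_of_nonneg (l1norm_nonneg _)]; exact l1norm_sub_le _ _)
  calc ∫ y, f y ∂(π.map Prod.fst) = ∫ p, f p.1 ∂π :=
        integral_map measurable_fst.aemeasurable hfc.aestronglyMeasurable
    _ ≤ ∫ p, (f p.2 + M * l1norm (p.1 - p.2)) ∂π :=
        integral_mono hf₁ (hf₂.add (hcost.const_mul M)) fun p => hf p.1 p.2
    _ = ∫ y, f y ∂(π.map Prod.snd) + M * ∫ p, l1norm (p.1 - p.2) ∂π := by
        rw [integral_add hf₂ (hcost.const_mul M), integral_const_mul,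
          integral_map measurable_snd.aemeasurable hfc.aestronglyMeasurable]

lemma integral_le_add_mul_wass (hM : 0 ≤ M) (hf : L1Lipschitz M f)
    {P Q : Measure (ι → ℝ)} [IsProbabilityMeasure P] [IsProbabilityMeasure Q]
    (hP : Integrable l1norm P) (hQ : Integrable l1norm Q) :
    ∫ y, f y ∂P ≤ ∫ y, f y ∂Q + M * wass P Q := by
  suffices ∫ y, f y ∂P - ∫ y, f y ∂Q ≤ M • wass P Q by rw [smul_eq_mul] at this; linarith
  rw [wass, ← Real.sInf_smul_of_nonneg hM]
  refine le_csInf (Set.Nonempty.smul_set ⟨_, P.prod Q, inferInstance, by simp, by simp, rfl⟩) ?_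
  rintro _ ⟨_, ⟨π, hπ, rfl, rfl, rfl⟩, rfl⟩
  have := hf.integral_le_of_coupling hM hP hQ
  simp only [smul_eq_mul]
  linarith

end L1Lipschitz

end L1Norm

section emp

variable {ι : Type*} [Fintype ι] {N : ℕ}

lemma isProbabilityMeasure_emp (hN : 0 < N) (a : Fin N → ι → ℝ) :
    IsProbabilityMeasure (emp a) := by
  constructor
  simp [emp, ENNReal.inv_mul_cancel, hN.ne']

lemma integrable_emp (hN : 0 < N) (a : Fin N → ι → ℝ) (f : (ι → ℝ) → ℝ) :
    Integrable f (emp a) :=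
  (integrable_finsetSum_measure.mpr fun i _ => integrable_dirac enorm_lt_top).smul_measure
    (ENNReal.inv_ne_top.mpr (by simp [hN.ne']))

lemma integral_emp (a : Fin N → ι → ℝ) (f : (ι → ℝ) → ℝ) :
    ∫ y, f y ∂(emp a) = (N : ℝ)⁻¹ * ∑ i, f (a i) := by
  rw [emp, integral_smul_measure,
    integral_finsetSum_measure fun i _ => integrable_dirac enorm_lt_top]
  simp [integral_dirac]

end emp

lemma l1Lipschitz_maxAffine {κ ι : Type*} [Finite κ] [Nonempty κ] [Fintype ι]
    (c : κ → ι → ℝ) (e : κ → ℝ) :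
    L1Lipschitz (⨆ l, ⨆ k, |c l k|) (fun y => ⨆ l, (∑ k, c l k * y k + e l)) :=
  L1Lipschitz.iSup fun l => l1Lipschitz_affine (c l) (e l) fun k =>
    (le_ciSup (Set.finite_range _).bddAbove k).trans
      (le_ciSup (f := fun l => ⨆ k, |c l k|) (Set.finite_range _).bddAbove l)

lemma iSup_iSup_abs_nonneg {κ ι : Type*} (c : κ → ι → ℝ) : 0 ≤ ⨆ l, ⨆ k, |c l k| :=
  Real.iSup_nonneg fun _ => Real.iSup_nonneg fun _ => abs_nonneg _

theorem stmt17_general {dd J L N : ℕ} (hJ : 0 < J) (hL : 0 < L) (hN : 0 < N)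
    (a : Fin J → Fin dd → ℝ) (b : Fin J → ℝ)
    (c : Fin L → Fin dd → ℝ) (e : Fin L → ℝ)
    (β : ℝ) (hβ0 : 0 < β)
    (yhat : Fin N → Fin dd → ℝ) (ε : ℝ)
    (s q : Fin N → ℝ) (t : ℝ)
    (hi : ∀ i j, ∑ k, a j k * yhat i k + b j ≤ s i)
    (hii : (⨆ l, ⨆ k, |c l k|) * ε + (N : ℝ)⁻¹ * ∑ i, q i ≤ t * β)
    (hiii : ∀ i l, max (∑ k, c l k * yhat i k + e l + t) 0 ≤ q i)
    (P : Measure (Fin dd → ℝ)) [IsProbabilityMeasure P]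
    (hPmom : Integrable (fun v => l1norm v) P)
    (hball : wass P (emp yhat) ≤ ε) :
    (∫ y, (⨆ j, (∑ k, a j k * y k + b j)) ∂P
        ≤ (⨆ j, ⨆ k, |a j k|) * ε + (N : ℝ)⁻¹ * ∑ i, s i) ∧
    (⨅ t' : ℝ, β⁻¹ * ∫ y, max ((⨆ l, (∑ k, c l k * y k + e l)) + t') 0 ∂P - t') ≤ 0 := by
  have : Nonempty (Fin J) := ⟨⟨0, hJ⟩⟩
  have : Nonempty (Fin L) := ⟨⟨0, hL⟩⟩
  have := isProbabilityMeasure_emp hN yhat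
  have hemp : Integrable l1norm (emp yhat) := integrable_emp hN yhat _
  constructor
  · have hlam := iSup_iSup_abs_nonneg a
    have hh := (l1Lipschitz_maxAffine a b).integral_le_add_mul_wass hlam hPmom hemp
    rw [integral_emp] at hh
    refine hh.trans ?_
    rw [add_comm]
    gcongr with i
    exact ciSup_le (hi i)
  · refine Real.iInf_nonpos' ⟨t, ?_⟩
    have hθ := iSup_iSup_abs_nonneg c
    have hψ := ((l1Lipschitz_maxAffine c e).max_add_const_zero hθ t).integral_le_add_mul_wass
      hθ hPmom hemp
    have hq : ∀ i, max ((⨆ l, (∑ k, c l k * yhat i k + e l)) + t) 0 ≤ q i := fun i =>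
      max_le (le_sub_iff_add_le.mp <| ciSup_le fun l =>
          le_sub_iff_add_le.mpr <| (le_max_left _ _).trans (hiii i l))
        ((le_max_right _ _).trans (hiii i ⟨0, hL⟩))
    rw [integral_emp] at hψ
    have hint : ∫ y, max ((⨆ l, (∑ k, c l k * y k + e l)) + t) 0 ∂P ≤ t * β := by
      refine hψ.trans (le_trans ?_ hii)
      rw [add_comm]
      gcongr with i
      exact hq i
    calc β⁻¹ * ∫ y, max ((⨆ l, (∑ k, c l k * y k + e l)) + t) 0 ∂P - t
        ≤ β⁻¹ * (t * β) - t := by gcongr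
      _ = 0 := by field_simp; ring

/-- **Theorem 3, deterministic guarantee of the doubly robust program.**
If the auxiliary variables `sᵢ, qᵢ, t` satisfy the linear constraints of the doubly robust
program, then for every probability measure `ℙ` in the Wasserstein ball of radius `ε`
around the empirical measure: (a) `∫ h dℙ ≤ λε + (1/N)Σᵢ sᵢ`, and (b) `CVaR_{1−β}^ℙ(g) ≤ 0`. -/
theorem stmt17 {dd J L N : ℕ} (hJ : 0 < J) (hL : 0 < L) (hN : 0 < N)
    (a : Fin J → Fin dd → ℝ) (b : Fin J → ℝ)
    (c : Fin L → Fin dd → ℝ) (e : Fin L → ℝ)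
    (β : ℝ) (hβ0 : 0 < β) (hβ1 : β ≤ 1)
    (yhat : Fin N → Fin dd → ℝ) (ε : ℝ) (hε : 0 ≤ ε)
    (s q : Fin N → ℝ) (t : ℝ)
    (hi : ∀ i j, ∑ k, a j k * yhat i k + b j ≤ s i)
    (hii : (⨆ l, ⨆ k, |c l k|) * ε + (N : ℝ)⁻¹ * ∑ i, q i ≤ t * β)
    (hiii : ∀ i l, max (∑ k, c l k * yhat i k + e l + t) 0 ≤ q i)
    (P : Measure (Fin dd → ℝ)) [IsProbabilityMeasure P]
    (hPmom : Integrable (fun v => l1norm v) P)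
    (hball : wass P (emp yhat) ≤ ε) :
    (∫ y, (⨆ j, (∑ k, a j k * y k + b j)) ∂P
        ≤ (⨆ j, ⨆ k, |a j k|) * ε + (N : ℝ)⁻¹ * ∑ i, s i) ∧
    (⨅ t' : ℝ, β⁻¹ * ∫ y, max ((⨆ l, (∑ k, c l k * y k + e l)) + t') 0 ∂P - t') ≤ 0 :=
  stmt17_general hJ hL hN a b c e β hβ0 yhat ε s q t hi hii hiii P hPmom hball
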